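/- arXiv:1511.08535 — 4 statements merged into one kernel-verified Lean document; each statement's English description precedes it below -/
import Mathlib

section
/- For any two invertible n×n matrices A and B over a field F, rank(ABA⁻¹B⁻¹ − I) ≤ 2·min(rank(A − I), rank(B − I)). -/
lemma rank_sub_le' {F : Type*} [Field F] {n : ℕ} (X Y : Matrix (Fin n) (Fin n) F) :
    (X - Y).rank ≤ X.rank + Y.rank := by
  have h : LinearMap.range (X - Y).mulVecLin ≤ LinearMap.range X.mulVecLin ⊔ LinearMap.range Y.mulVecLin := by
    rintro v ⟨w, rfl⟩
    have : (X - Y).mulVecLin w = X.mulVecLin w - Y.mulVecLin w := by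
      simp [Matrix.sub_mulVec]
    rw [this]
    exact Submodule.sub_mem _ (Submodule.mem_sup_left ⟨w, rfl⟩)
      (Submodule.mem_sup_right ⟨w, rfl⟩)
  calc (X - Y).rank ≤ Module.finrank F (LinearMap.range X.mulVecLin ⊔ LinearMap.range Y.mulVecLin : Submodule F _) :=
        Submodule.finrank_mono h
    _ ≤ X.rank + Y.rank := Submodule.finrank_add_le_finrank_add_finrank _ _

lemma comm_rank_le {F : Type*} [Field F] {n : ℕ}
    (A B : Matrix.GeneralLinearGroup (Fin n) F) :
    (((A * B * A⁻¹ * B⁻¹ : Matrix.GeneralLinearGroup (Fin n) F) :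
        Matrix (Fin n) (Fin n) F) - 1).rank ≤
      2 * ((A : Matrix (Fin n) (Fin n) F) - 1).rank := by
  set a := (A : Matrix (Fin n) (Fin n) F)
  set b := (B : Matrix (Fin n) (Fin n) F)
  set a' := ((A⁻¹ : Matrix.GeneralLinearGroup (Fin n) F) : Matrix (Fin n) (Fin n) F)
  set b' := ((B⁻¹ : Matrix.GeneralLinearGroup (Fin n) F) : Matrix (Fin n) (Fin n) F)
  have haa : a * a' = 1 := A.mul_inv
  have hbb : b * b' = 1 := B.mul_inv
  have hcoe : ((A * B * A⁻¹ * B⁻¹ : Matrix.GeneralLinearGroup (Fin n) F) :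
      Matrix (Fin n) (Fin n) F) = a * b * a' * b' := rfl
  have key : ((A * B * A⁻¹ * B⁻¹ : Matrix.GeneralLinearGroup (Fin n) F) :
      Matrix (Fin n) (Fin n) F) - 1 = ((a - 1) * b - b * (a - 1)) * (a' * b') := by
    rw [hcoe]
    have : (a * b - b * a) * (a' * b') = a * b * a' * b' - 1 := by
      rw [Matrix.sub_mul]
      congr 1
      · noncomm_ring
      · calc b * a * (a' * b') = b * (a * a') * b' := by noncomm_ring
          _ = 1 := by rw [haa, Matrix.mul_one, hbb]
    rw [← this]
    congr 1
    noncomm_ring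
  rw [key]
  calc (((a - 1) * b - b * (a - 1)) * (a' * b')).rank
      ≤ ((a - 1) * b - b * (a - 1)).rank := Matrix.rank_mul_le_left _ _
    _ ≤ ((a - 1) * b).rank + (b * (a - 1)).rank := rank_sub_le' _ _
    _ ≤ (a - 1).rank + (a - 1).rank :=
        add_le_add (Matrix.rank_mul_le_left _ _) (Matrix.rank_mul_le_right _ _)
    _ = 2 * (a - 1).rank := (two_mul _).symm

lemma rank_inv_sub_one_le {F : Type*} [Field F] {n : ℕ}
    (g : Matrix.GeneralLinearGroup (Fin n) F) :
    (((g⁻¹ : Matrix.GeneralLinearGroup (Fin n) F) : Matrix (Fin n) (Fin n) F) - 1).rank ≤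
      (((g : Matrix (Fin n) (Fin n) F)) - 1).rank := by
  have hg : ((g⁻¹ : Matrix.GeneralLinearGroup (Fin n) F) : Matrix (Fin n) (Fin n) F) *
      (g : Matrix (Fin n) (Fin n) F) = 1 := g.inv_mul
  have key : ((g⁻¹ : Matrix.GeneralLinearGroup (Fin n) F) : Matrix (Fin n) (Fin n) F) - 1
      = ((g⁻¹ : Matrix.GeneralLinearGroup (Fin n) F) : Matrix (Fin n) (Fin n) F) *
        (((g : Matrix (Fin n) (Fin n) F) - 1) * (-1)) := by
    rw [show (((g : Matrix (Fin n) (Fin n) F)) - 1) * (-1) = 1 - (g : Matrix (Fin n) (Fin n) F)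
      from by noncomm_ring, mul_sub, mul_one, hg]
  rw [key]
  exact (Matrix.rank_mul_le_right _ _).trans (Matrix.rank_mul_le_left _ _)

/-- For invertible n×n matrices A, B over a field F,
rank(ABA⁻¹B⁻¹ − I) ≤ 2·min(rank(A − I), rank(B − I)). -/
theorem stmt0 (F : Type*) [Field F] (n : ℕ)
    (A B : Matrix.GeneralLinearGroup (Fin n) F) :
    (((A * B * A⁻¹ * B⁻¹ : Matrix.GeneralLinearGroup (Fin n) F) :
        Matrix (Fin n) (Fin n) F) - 1).rank ≤
      2 * min (((A : Matrix (Fin n) (Fin n) F) - 1).rank)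
        (((B : Matrix (Fin n) (Fin n) F) - 1).rank) := by
  rw [← Nat.mul_min_mul_left]
  refine le_min (comm_rank_le A B) ?_
  have hinv : (A * B * A⁻¹ * B⁻¹ : Matrix.GeneralLinearGroup (Fin n) F)
      = (B * A * B⁻¹ * A⁻¹ : Matrix.GeneralLinearGroup (Fin n) F)⁻¹ := by group
  rw [hinv]
  exact (rank_inv_sub_one_le (B * A * B⁻¹ * A⁻¹)).trans (comm_rank_le B A)
end

section
/- Let V be an n-dimensional vector space over F_q and A ∈ GL(V) a matrix of degree k (i.e., rank(A − I) = k) whose eigenvalues in F_q are all equal to 1 (equivalently, every eigenvalue of A is either 1 or lies outside F_q). Then for every t with t ≤ k/2 there exists a t-dimensional subspace W of V with W ∩ A(W) = {0}. -/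
/-!
Build `W` one vector at a time, keeping `dim (W ⊔ A W) = 2 dim W`, which forces `W ⊓ A W = 0`.
To extend `W`, with `U = W ⊔ A W`, it suffices to pick `x ∉ U` such that `A x ∉ U ⊔ ⟨x⟩`, i.e.
`x` avoids `U` and the `q` preimages `(A - c)⁻¹ U`, `c ∈ F_q`. Each of these `q + 1` subspaces has
codimension at least `2`: this is where `dim ker (A - 1) = n - k` and the invertibility of `A - c`
for `c ≠ 1` enter. Since `(q + 1) q ^ (n - 2) < q ^ n`, they do not cover `F_q ^ n`.
-/

open Module Submodule LinearMap

section DivisionRing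

variable {K V V' : Type*} [DivisionRing K] [AddCommGroup V] [Module K V] [FiniteDimensional K V]
  [AddCommGroup V'] [Module K V'] [FiniteDimensional K V']

theorem finrank_comap_le_finrank_add_finrank_ker (f : V →ₗ[K] V') (p : Submodule K V') :
    finrank K (p.comap f) ≤ finrank K p + finrank K (ker f) := by
  have h := f.lift_rank_comap_le p
  rw [← finrank_eq_rank, ← finrank_eq_rank, ← finrank_eq_rank] at h
  simp only [Cardinal.lift_natCast] at h
  exact_mod_cast h

theorem exists_forall_notMem_of_finrank_add_two_le [Fintype K] (s : Option K → Submodule K V)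
    (hs : ∀ i, finrank K (s i) + 2 ≤ finrank K V) : ∃ x : V, ∀ i, x ∉ s i := by
  set q := Nat.card K
  set n := finrank K V
  have hq : 2 ≤ q := Finite.one_lt_card
  have hcard : ∀ i, Nat.card (s i) ≤ q ^ (n - 2) := fun i => by
    rw [natCard_eq_pow_finrank (K := K)]
    exact Nat.pow_le_pow_right Nat.card_pos (by have := hs i; omega)
  by_contra! hcover
  have hle : q ^ n ≤ (q + 1) * q ^ (n - 2) :=
    calc q ^ n = Nat.card V := (natCard_eq_pow_finrank (K := K)).symm
      _ = (⋃ i, (s i : Set V)).ncard := by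
        rw [Set.iUnion_eq_univ_iff.mpr hcover, Set.ncard_univ]
      _ ≤ ∑ i, Nat.card (s i) := Set.ncard_iUnion_le_of_fintype _
      _ ≤ ∑ _i : Option K, q ^ (n - 2) := Finset.sum_le_sum fun i _ => hcard i
      _ = (q + 1) * q ^ (n - 2) := by simp [q, Nat.card_eq_fintype_card]
  have hqn : q ^ n = q ^ 2 * q ^ (n - 2) := by
    rw [← pow_add]; congr 1; have := hs none; omega
  rw [hqn] at hle
  nlinarith [Nat.le_of_mul_le_mul_right hle (by positivity)]

theorem finrank_sup_map_sup_span_singleton (f : V →ₗ[K] V) {W : Submodule K V} {x : V}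
    (hx : x ∉ W ⊔ W.map f) (hfx : ∀ c : K, f x - c • x ∉ W ⊔ W.map f) :
    finrank K ↥(W ⊔ span K {x} ⊔ (W ⊔ span K {x}).map f) = finrank K ↥(W ⊔ W.map f) + 2 := by
  set U := W ⊔ W.map f
  have hfx' : f x ∉ U ⊔ span K {x} := fun hfx' => by
    obtain ⟨u, hu, _, hcx, hsum⟩ := mem_sup.mp hfx'
    obtain ⟨c, rfl⟩ := mem_span_singleton.mp hcx
    exact hfx c (by rwa [← hsum, add_sub_cancel_right])
  have hsup : W ⊔ span K {x} ⊔ (W ⊔ span K {x}).map f = U ⊔ span K {x} ⊔ span K {f x} := by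
    rw [Submodule.map_sup, Submodule.map_span, Set.image_singleton, sup_sup_sup_comm,
      ← sup_assoc]
  rw [hsup, finrank_sup_span_singleton hfx', finrank_sup_span_singleton hx]

end DivisionRing

section Field

variable {F V : Type*} [Field F] [Fintype F] [AddCommGroup V] [Module F V] [FiniteDimensional F V]

theorem exists_finrank_eq_finrank_sup_map_eq (f : V →ₗ[F] V) (t : ℕ)
    (h : ∀ c : F, finrank F (ker (f - c • LinearMap.id)) + 2 * t ≤ finrank F V) :
    ∃ W : Submodule F V, finrank F W = t ∧ finrank F ↥(W ⊔ W.map f) = 2 * t := by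
  induction t with
  | zero => exact ⟨⊥, by simp, by simp⟩
  | succ t ih =>
    obtain ⟨W, hW, hWf⟩ := ih fun c => by have := h c; omega
    set U := W ⊔ W.map f
    let avoid : Option F → Submodule F V := fun
      | none => U
      | some c => U.comap (f - c • LinearMap.id)
    obtain ⟨x, hx⟩ := exists_forall_notMem_of_finrank_add_two_le avoid fun
      | none => by have := h 0; simp only [avoid]; omega
      | some c => by
        have := finrank_comap_le_finrank_add_finrank_ker (f - c • LinearMap.id) U
        have := h c; simp only [avoid]; omega
    have hxW : x ∉ W := fun hxW => hx none (le_sup_left (b := W.map f) hxW)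
    refine ⟨W ⊔ span F {x}, by rw [finrank_sup_span_singleton hxW, hW], ?_⟩
    rw [finrank_sup_map_sup_span_singleton f (hx none) fun c => by simpa [avoid] using hx (some c),
      hWf]
    ring

theorem exists_finrank_eq_inf_map_eq_bot (f : V →ₗ[F] V) (t : ℕ)
    (h : ∀ c : F, finrank F (ker (f - c • LinearMap.id)) + 2 * t ≤ finrank F V) :
    ∃ W : Submodule F V, finrank F W = t ∧ W ⊓ W.map f = ⊥ := by
  obtain ⟨W, hW, hWf⟩ := exists_finrank_eq_finrank_sup_map_eq f t h
  refine ⟨W, hW, finrank_eq_zero.mp ?_⟩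
  have := finrank_sup_add_finrank_inf_eq W (W.map f)
  have := finrank_map_le f W
  omega

end Field

theorem stmt8_general (F : Type*) [Field F] [Fintype F] (n k : ℕ)
    (A : Matrix (Fin n) (Fin n) F)
    (hk : (A - 1).rank = k)
    (heig : ∀ x : F, x ≠ 1 → IsUnit (A - x • (1 : Matrix (Fin n) (Fin n) F)))
    (t : ℕ) (ht : 2 * t ≤ k) :
    ∃ W : Submodule F (Fin n → F), Module.finrank F W = t ∧
      W ⊓ W.map A.mulVecLin = ⊥ := by
  refine exists_finrank_eq_inf_map_eq_bot _ t fun c => ?_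
  have hmul : A.mulVecLin - c • LinearMap.id = (A - c • 1).mulVecLin := by ext; simp
  have hrank : k + finrank F (ker (A - 1).mulVecLin) = n := by
    rw [← hk, Matrix.rank, LinearMap.finrank_range_add_finrank_ker, finrank_fin_fun]
  rw [hmul, finrank_fin_fun]
  by_cases hc : c = 1
  · subst hc
    rw [one_smul]
    omega
  · rw [ker_eq_bot.mpr (Matrix.mulVec_injective_iff_isUnit.mpr (heig c hc)), finrank_bot]
    omega

/-- If A ∈ GL_n(F_q) has degree k = rank(A − I) and its only eigenvalue in F_q is 1,
then for every t with t ≤ k/2 there is a t-dimensional subspace W with W ∩ A(W) = 0. -/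
theorem stmt8 (F : Type*) [Field F] [Fintype F] (n k : ℕ)
    (A : Matrix (Fin n) (Fin n) F) (hA : IsUnit A)
    (hk : (A - 1).rank = k)
    (heig : ∀ x : F, x ≠ 1 → IsUnit (A - x • (1 : Matrix (Fin n) (Fin n) F)))
    (t : ℕ) (ht : 2 * t ≤ k) :
    ∃ W : Submodule F (Fin n → F), Module.finrank F W = t ∧
      W ⊓ W.map A.mulVecLin = ⊥ :=
  stmt8_general F n k A hk heig t ht
end

section
/- Let S be a symmetric generating set of a subgroup H of GL_n(F_q), let A ∈ H have degree k (rank(A − I) = k), and let B be conjugate to A in H. Then B = M A M⁻¹ for some M ∈ H that is a product of at most q^{2nk} elements of S. -/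
/-!
Conjugation preserves the degree `rank (g - 1)`, and a matrix of rank at most `k` factors as
`X * Y` with `X` of size `n × k` and `Y` of size `k × n`; hence the conjugacy class of `A` has
at most `q ^ (2 n k)` elements. Words in the symmetric set `S` produce all of `H`, and along a
shortest word `w` with `w A w⁻¹ = B` the conjugates of `A` by the suffixes of `w` are pairwise
distinct (a repetition could be cut out), so the length of `w` is less than the size of the class.
-/

theorem List.prod_take_append_drop_smul_eq {M α : Type*} [Monoid M] [MulAction M α]
    {l : List M} {x : α} {i j : ℕ}
    (h : (l.drop i).prod • x = (l.drop j).prod • x) :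
    (l.take i ++ l.drop j).prod • x = l.prod • x := by
  rw [List.prod_append, mul_smul, ← h, ← mul_smul, ← List.prod_append, List.take_append_drop]

namespace MulAction

variable {M α : Type*} [Monoid M] [MulAction M α]

theorem exists_list_length_lt_ncard_orbit_closure {S : Set M} {x y : α}
    (hfin : (orbit (Submonoid.closure S) x).Finite) (hy : y ∈ orbit (Submonoid.closure S) x) :
    ∃ l : List M, l.length < (orbit (Submonoid.closure S) x).ncard ∧ (∀ g ∈ l, g ∈ S) ∧
      l.prod • x = y := by
  classical
  have hword : ∃ m, ∃ l : List M, l.length = m ∧ (∀ g ∈ l, g ∈ S) ∧ l.prod • x = y := by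
    obtain ⟨⟨c, hc⟩, rfl⟩ := hy
    obtain ⟨l, hlS, rfl⟩ := Submonoid.exists_list_of_mem_closure hc
    exact ⟨_, l, rfl, hlS, rfl⟩
  obtain ⟨l, hlen, hlS, rfl⟩ := Nat.find_spec hword
  have hshortest : ∀ l' : List M, (∀ g ∈ l', g ∈ S) → l'.prod • x = l.prod • x →
      l.length ≤ l'.length := fun l' hl'S hl' => hlen ▸ Nat.find_min' hword ⟨l', rfl, hl'S, hl'⟩
  let p : Fin (l.length + 1) → orbit (Submonoid.closure S) x := fun i =>
    ⟨(l.drop i).prod • x, ⟨⟨_, Submonoid.list_prod_mem _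
      fun g hg => Submonoid.subset_closure (hlS g (List.mem_of_mem_drop hg))⟩, rfl⟩⟩
  have hne : ∀ i j : Fin (l.length + 1), i < j → p i ≠ p j := by
    intro i j hij hp
    have := hshortest _ (fun g hg => by
        rcases List.mem_append.mp hg with hg | hg
        exacts [hlS g (List.mem_of_mem_take hg), hlS g (List.mem_of_mem_drop hg)])
      (List.prod_take_append_drop_smul_eq (Subtype.ext_iff.mp hp))
    simp only [List.length_append, List.length_take, List.length_drop] at this
    omega
  have hinj : Function.Injective p := by
    intro i j hp
    by_contra h
    rcases lt_or_gt_of_ne h with h | h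
    exacts [hne i j h hp, hne j i h hp.symm]
  refine ⟨l, ?_, hlS, rfl⟩
  have := hfin.to_subtype
  calc l.length < Nat.card (Fin (l.length + 1)) := by simp
    _ ≤ _ := Nat.card_le_card_of_injective p hinj

end MulAction

open ConjAct in
theorem exists_list_length_lt_ncard_conjugatesOf {G : Type*} [Group G] {S : Set G} {A C : G}
    (hfin : (conjugatesOf A).Finite) (hC : C ∈ Submonoid.closure S) :
    ∃ l : List G, l.length < (conjugatesOf A).ncard ∧ (∀ g ∈ l, g ∈ S) ∧
      l.prod * A * l.prod⁻¹ = C * A * C⁻¹ := by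
  let S' : Set (ConjAct G) := ofConjAct ⁻¹' S
  have horbit : MulAction.orbit (Submonoid.closure S') A ⊆ conjugatesOf A := by
    rintro _ ⟨c, rfl⟩
    exact isConj_iff.mpr ⟨ofConjAct c, (ConjAct.smul_def _ _).symm⟩
  have hC' : toConjAct C ∈ Submonoid.closure S' := by
    induction hC using Submonoid.closure_induction with
    | mem s hs => exact Submonoid.subset_closure hs
    | one => exact one_mem _
    | mul _ _ _ _ hx hy => exact mul_mem hx hy
  obtain ⟨l, hlen, hlS, hl⟩ := MulAction.exists_list_length_lt_ncard_orbit_closure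
    (hfin.subset horbit) (y := C * A * C⁻¹) ⟨⟨_, hC'⟩, toConjAct_smul C A⟩
  refine ⟨l.map ofConjAct, ?_, ?_, ?_⟩
  · simpa using hlen.trans_le (Set.ncard_le_ncard horbit hfin)
  · intro g hg
    obtain ⟨c, hc, rfl⟩ := List.mem_map.mp hg
    exact hlS c hc
  · rw [← map_list_prod, ← ConjAct.smul_def, hl]

theorem Subgroup.closure_toSubmonoid_of_inv_eq {G : Type*} [Group G] {S : Set G}
    (hS : S⁻¹ = S) : (Subgroup.closure S).toSubmonoid = Submonoid.closure S := by
  rw [Subgroup.closure_toSubmonoid, hS, Set.union_self]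

theorem Matrix.exists_mul_eq_of_rank_le {F m n : Type*} [Field F] [Fintype m] [Fintype n]
    {k : ℕ} {M : Matrix m n F} (h : M.rank ≤ k) :
    ∃ (X : Matrix m (Fin k) F) (Y : Matrix (Fin k) n F), X * Y = M := by
  classical
  let R := LinearMap.range M.mulVecLin
  obtain ⟨ι, hι⟩ : ∃ ι : R →ₗ[F] Fin k → F, Function.Injective ι :=
    finrank_le_iff_exists_linearMap.mp (h.trans_eq (Module.finrank_fin_fun F).symm)
  obtain ⟨π, hπ⟩ := ι.exists_leftInverse_of_injective (LinearMap.ker_eq_bot.mpr hι)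
  refine ⟨LinearMap.toMatrix' (R.subtype ∘ₗ π),
    LinearMap.toMatrix' (ι ∘ₗ M.mulVecLin.rangeRestrict), ?_⟩
  rw [← LinearMap.toMatrix'_comp, LinearMap.comp_assoc, ← LinearMap.comp_assoc _ ι, hπ,
    LinearMap.id_comp, LinearMap.subtype_comp_codRestrict, ← Matrix.toLin'_apply',
    LinearMap.toMatrix'_toLin']

theorem Matrix.ncard_setOf_rank_le_le {F m n : Type*} [Field F] [Fintype F] [Fintype m]
    [Fintype n] (k : ℕ) :
    {M : Matrix m n F | M.rank ≤ k}.ncard ≤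
      Fintype.card F ^ (k * (Fintype.card m + Fintype.card n)) := by
  let mul : Matrix m (Fin k) F × Matrix (Fin k) n F → Matrix m n F := fun p => p.1 * p.2
  calc {M : Matrix m n F | M.rank ≤ k}.ncard ≤ (Set.range mul).ncard :=
        Set.ncard_le_ncard (fun M hM => by
          obtain ⟨X, Y, hXY⟩ := Matrix.exists_mul_eq_of_rank_le hM
          exact ⟨(X, Y), hXY⟩) (Set.toFinite _)
    _ ≤ Nat.card (Matrix m (Fin k) F × Matrix (Fin k) n F) := Finite.card_range_le mul
    _ = Fintype.card F ^ (k * (Fintype.card m + Fintype.card n)) := by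
        simp only [Matrix, Nat.card_prod, Nat.card_fun, Nat.card_eq_fintype_card, Fintype.card_pi,
          Finset.prod_const, Finset.card_univ, Fintype.card_fin, ← pow_mul, ← pow_add]
        ring

namespace Matrix.GeneralLinearGroup

variable {n R : Type*} [Fintype n] [DecidableEq n]

noncomputable def degree [CommRing R] (g : GL n R) : ℕ := ((g : Matrix n n R) - 1).rank

theorem degree_eq_of_isConj [CommRing R] {g h : GL n R} (hgh : IsConj g h) :
    degree h = degree g := by
  obtain ⟨c, rfl⟩ := isConj_iff.mp hgh
  have hc : IsUnit (c : Matrix n n R).det := (Matrix.isUnit_iff_isUnit_det _).mp c.isUnit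
  have hc' : IsUnit ((c⁻¹ : GL n R) : Matrix n n R).det :=
    (Matrix.isUnit_iff_isUnit_det _).mp c⁻¹.isUnit
  have : ((c * g * c⁻¹ : GL n R) : Matrix n n R) - 1 =
      (c : Matrix n n R) * ((g : Matrix n n R) - 1) * ((c⁻¹ : GL n R) : Matrix n n R) := by
    simp [mul_sub, sub_mul]
  rw [degree, degree, this, Matrix.rank_mul_eq_left_of_isUnit_det _ _ hc',
    Matrix.rank_mul_eq_right_of_isUnit_det _ _ hc]

theorem ncard_setOf_degree_le_le [Field R] [Fintype R] (k : ℕ) :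
    {g : GL n R | degree g ≤ k}.ncard ≤ Fintype.card R ^ (2 * Fintype.card n * k) := by
  calc {g : GL n R | degree g ≤ k}.ncard ≤ {M : Matrix n n R | M.rank ≤ k}.ncard :=
        Set.ncard_le_ncard_of_injOn (fun g => (g : Matrix n n R) - 1) (fun _ hg => hg)
          (fun _ _ _ _ h => Units.ext (sub_left_injective h)) (Set.toFinite _)
    _ ≤ Fintype.card R ^ (2 * Fintype.card n * k) := by
        convert Matrix.ncard_setOf_rank_le_le (m := n) (n := n) (F := R) k using 2
        ring

end Matrix.GeneralLinearGroup

open Matrix.GeneralLinearGroup in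
theorem stmt9_general (F : Type*) [Field F] [Fintype F] (n k : ℕ)
    (H : Subgroup (Matrix.GeneralLinearGroup (Fin n) F))
    (S : Set (Matrix.GeneralLinearGroup (Fin n) F))
    (hsymm : S⁻¹ = S) (hgen : Subgroup.closure S = H)
    (A B : Matrix.GeneralLinearGroup (Fin n) F)
    (hk : ((A : Matrix (Fin n) (Fin n) F) - 1).rank = k)
    (hconj : ∃ C ∈ H, B = C * A * C⁻¹) :
    ∃ l : List (Matrix.GeneralLinearGroup (Fin n) F),
      l.length ≤ Fintype.card F ^ (2 * n * k) ∧ (∀ g ∈ l, g ∈ S) ∧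
      l.prod ∈ H ∧ B = l.prod * A * l.prod⁻¹ := by
  obtain ⟨C, hCH, rfl⟩ := hconj
  have hC : C ∈ Submonoid.closure S := by
    rwa [← Subgroup.closure_toSubmonoid_of_inv_eq hsymm, hgen]
  obtain ⟨l, hlen, hlS, hl⟩ := exists_list_length_lt_ncard_conjugatesOf (Set.toFinite _) hC
  have hclass : conjugatesOf A ⊆ {g | degree g ≤ k} := fun g hg =>
    ((degree_eq_of_isConj hg).trans hk).le
  have hcard : (conjugatesOf A).ncard ≤ Fintype.card F ^ (2 * n * k) := by
    simpa using (Set.ncard_le_ncard hclass (Set.toFinite _)).trans (ncard_setOf_degree_le_le k)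
  refine ⟨l, by omega, hlS, ?_, hl.symm⟩
  exact hgen ▸ Subgroup.list_prod_mem _ fun g hg => Subgroup.subset_closure (hlS g hg)

/-- If S is a symmetric generating set of a subgroup H ≤ GL_n(F_q), A ∈ H has degree k,
and B is conjugate to A in H, then B = M A M⁻¹ for some M ∈ H that is a product of at
most q^{2nk} elements of S. -/
theorem stmt9 (F : Type*) [Field F] [Fintype F] (n k : ℕ)
    (H : Subgroup (Matrix.GeneralLinearGroup (Fin n) F))
    (S : Set (Matrix.GeneralLinearGroup (Fin n) F))
    (hSH : S ⊆ H) (hsymm : S⁻¹ = S) (hgen : Subgroup.closure S = H)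
    (A B : Matrix.GeneralLinearGroup (Fin n) F) (hA : A ∈ H) (hB : B ∈ H)
    (hk : ((A : Matrix (Fin n) (Fin n) F) - 1).rank = k)
    (hconj : ∃ C ∈ H, B = C * A * C⁻¹) :
    ∃ l : List (Matrix.GeneralLinearGroup (Fin n) F),
      l.length ≤ Fintype.card F ^ (2 * n * k) ∧ (∀ g ∈ l, g ∈ S) ∧
      l.prod ∈ H ∧ B = l.prod * A * l.prod⁻¹ :=
  stmt9_general F n k H S hsymm hgen A B hk hconj
end

section
/- The conjugacy class in GL_n(F_q) of a matrix A with rank(A − I) = k has at most q^{2nk} elements. -/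
/-! A conjugate `B` of `A` is determined by `B - 1`, which is conjugate to `A - 1` and so again
has rank `k`. A matrix of rank at most `k` factors through its column space, hence through
`F^k`, as `X * Y` with `X` of size `n × k` and `Y` of size `k × n`; there are at most
`q^(nk) * q^(kn)` such products. -/

open Matrix

namespace Matrix

variable {m n K : Type*} [Fintype n] [Field K]

theorem exists_eq_mul_of_rank_le {k : ℕ} (M : Matrix m n K) (h : M.rank ≤ k) :
    ∃ (X : Matrix m (Fin k) K) (Y : Matrix (Fin k) n K), M = X * Y := by
  classical
  set V := LinearMap.range M.mulVecLin
  obtain ⟨ι, hι⟩ : ∃ ι : V →ₗ[K] (Fin k → K), Function.Injective ι :=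
    (finrank_le_iff_exists_linearMap).1 (by rwa [Module.finrank_fin_fun])
  obtain ⟨π, hπ⟩ := ι.exists_leftInverse_of_injective (LinearMap.ker_eq_bot.2 hι)
  refine ⟨LinearMap.toMatrix' (V.subtype ∘ₗ π),
    LinearMap.toMatrix' (ι ∘ₗ M.mulVecLin.rangeRestrict), ?_⟩
  rw [← LinearMap.toMatrix'_comp, LinearMap.comp_assoc, ← LinearMap.comp_assoc _ ι π, hπ,
    LinearMap.id_comp, LinearMap.rangeRestrict, LinearMap.subtype_comp_codRestrict,
    ← Matrix.toLin'_apply', LinearMap.toMatrix'_toLin']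

theorem ncard_setOf_rank_le_le_s10 [Fintype m] [Fintype K] (k : ℕ) :
    {M : Matrix m n K | M.rank ≤ k}.ncard ≤
      Fintype.card K ^ ((Fintype.card m + Fintype.card n) * k) := by
  have hsub : {M : Matrix m n K | M.rank ≤ k} ⊆
      Set.range fun p : Matrix m (Fin k) K × Matrix (Fin k) n K => p.1 * p.2 := by
    rintro M hM
    obtain ⟨X, Y, rfl⟩ := M.exists_eq_mul_of_rank_le hM
    exact ⟨(X, Y), rfl⟩
  calc _ ≤ (Set.range fun p : Matrix m (Fin k) K × Matrix (Fin k) n K => p.1 * p.2).ncard :=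
        Set.ncard_le_ncard hsub
    _ ≤ Nat.card (Matrix m (Fin k) K × Matrix (Fin k) n K) :=
        (Nat.card_coe_set_eq _).symm.trans_le (Finite.card_range_le _)
    _ = _ := by
      simp only [Matrix, Nat.card_prod, Nat.card_fun, Nat.card_eq_fintype_card, Fintype.card_fun,
        Fintype.card_fin]
      ring

end Matrix

namespace Matrix.GeneralLinearGroup

variable {n K : Type*} [Fintype n] [DecidableEq n] [Field K]

theorem rank_sub_one_of_isConj {A B : GL n K} (h : IsConj A B) :
    ((B : Matrix n n K) - 1).rank = ((A : Matrix n n K) - 1).rank := by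
  obtain ⟨C, rfl⟩ := isConj_iff.1 h
  have hB : ((C * A * C⁻¹ : GL n K) : Matrix n n K) - 1 =
      C * ((A : Matrix n n K) - 1) * ((C⁻¹ : GL n K) : Matrix n n K) := by
    simp only [Units.val_mul, mul_sub, sub_mul, mul_one, Units.mul_inv]
  rw [hB, rank_mul_eq_left_of_isUnit_det _ _ ((isUnit_iff_isUnit_det _).1 C⁻¹.isUnit),
    rank_mul_eq_right_of_isUnit_det _ _ ((isUnit_iff_isUnit_det _).1 C.isUnit)]

end Matrix.GeneralLinearGroup

/-- The conjugacy class in GL_n(F_q) of a matrix A with rank(A − I) = k has at most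
q^{2nk} elements. -/
theorem stmt10 (F : Type*) [Field F] [Fintype F] (n k : ℕ)
    (A : Matrix.GeneralLinearGroup (Fin n) F)
    (hk : ((A : Matrix (Fin n) (Fin n) F) - 1).rank = k) :
    Set.ncard {B : Matrix.GeneralLinearGroup (Fin n) F | IsConj A B} ≤
      Fintype.card F ^ (2 * n * k) := by
  have hmaps : ∀ B ∈ {B : GL (Fin n) F | IsConj A B},
      (B : Matrix (Fin n) (Fin n) F) - 1 ∈ {M : Matrix (Fin n) (Fin n) F | M.rank ≤ k} :=
    fun B hB => (GeneralLinearGroup.rank_sub_one_of_isConj hB).trans hk |>.le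
  have hinj : Set.InjOn (fun B : GL (Fin n) F => (B : Matrix (Fin n) (Fin n) F) - 1)
      {B | IsConj A B} :=
    fun B _ B' _ h => Units.ext (sub_left_injective h)
  calc _ ≤ {M : Matrix (Fin n) (Fin n) F | M.rank ≤ k}.ncard :=
        Set.ncard_le_ncard_of_injOn _ hmaps hinj
    _ ≤ Fintype.card F ^ (2 * n * k) := by
      simpa [two_mul] using ncard_setOf_rank_le_le_s10 (m := Fin n) (n := Fin n) (K := F) k
end
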